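/- Under Assumption A, P(X + Z ≤ t, Z > t) ~ P(X > t) · E[X⁻]/|E[X]| as t → ∞ (i.e., the ratio of the two sides tends to 1). -/

import Mathlib

open MeasureTheory ProbabilityTheory Filter Set
open scoped ENNReal NNReal

noncomputable section

/-- The (right) tail function `t ↦ P(X > t)` of a random variable, as a real number. -/
def tail {Ω : Type*} [MeasurableSpace Ω] (μ : Measure Ω) (X : Ω → ℝ) (t : ℝ) : ℝ :=
  (μ {ω | t < X ω}).toReal

set_option linter.unusedSectionVars false
set_option linter.unusedVariables false
set_option maxHeartbeats 1000000

section Aux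

variable {Ω : Type*} [MeasurableSpace Ω] (μ : Measure Ω) [IsProbabilityMeasure μ]
  (X : Ω → ℝ)

lemma tail_nonneg (t : ℝ) : 0 ≤ tail μ X t := ENNReal.toReal_nonneg

lemma tail_le_one (t : ℝ) : tail μ X t ≤ 1 := by
  have : μ {ω | t < X ω} ≤ 1 := prob_le_one
  simpa [tail] using ENNReal.toReal_le_of_le_ofReal one_pos.le (by simpa using this)

lemma tail_anti : Antitone (tail μ X) := by
  intro s t hst
  exact ENNReal.toReal_mono (measure_ne_top _ _)
    (measure_mono (fun ω h => lt_of_le_of_lt hst h))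

lemma tail_measurable : Measurable (tail μ X) := (tail_anti μ X).measurable

lemma tail_pos (hpos : ∀ t : ℝ, 0 < μ {ω | t < X ω}) (t : ℝ) : 0 < tail μ X t :=
  ENNReal.toReal_pos (hpos t).ne' (measure_ne_top _ _)

lemma tail_eq_map (hX : Measurable X) (t : ℝ) :
    μ.map X (Ioi t) = ENNReal.ofReal (tail μ X t) := by
  rw [Measure.map_apply hX measurableSet_Ioi, tail,
    ENNReal.ofReal_toReal (measure_ne_top _ _)]
  rfl


/-- layer cake for X⁺ -/
lemma layercake_pos (hint : Integrable X μ) :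
    ∫ ω, max (X ω) 0 ∂μ = ∫ s in Ioi (0:ℝ), tail μ X s := by
  have hi : Integrable (fun ω => max (X ω) 0) μ := hint.pos_part
  have h := hi.integral_eq_integral_meas_lt (Eventually.of_forall fun ω => le_max_right _ _)
  rw [h]
  refine setIntegral_congr_fun measurableSet_Ioi (fun s hs => ?_)
  have : {a | s < max (X a) 0} = {ω | s < X ω} := by
    ext a; simp only [mem_setOf_eq, lt_max_iff]
    exact ⟨fun h => h.elim id (fun h' => absurd h' (not_lt.2 (le_of_lt hs)).elim), Or.inl⟩
  rw [this]; rfl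

lemma tail_integrableOn (hint : Integrable X μ) : IntegrableOn (tail μ X) (Ioi (0:ℝ)) := by
  constructor
  · exact ((tail_anti μ X).measurable.aestronglyMeasurable).restrict
  · rw [hasFiniteIntegral_iff_norm]
    have hb : ∀ s ∈ Ioi (0:ℝ), ENNReal.ofReal ‖tail μ X s‖ = μ {ω | s < X ω} := by
      intro s _
      rw [show tail μ X s = (μ {ω | s < X ω}).toReal from rfl,
        Real.norm_of_nonneg ENNReal.toReal_nonneg,
        ENNReal.ofReal_toReal (measure_ne_top _ _)]
    rw [setLIntegral_congr_fun measurableSet_Ioi hb]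
    have key := MeasureTheory.lintegral_eq_lintegral_meas_lt μ
      (Eventually.of_forall fun ω => le_max_right (X ω) 0)
      (hint.pos_part.aemeasurable)
    have hEq : ∫⁻ (t : ℝ) in Ioi 0, μ {a | t < max (X a) 0}
        = ∫⁻ (x : ℝ) in Ioi 0, μ {ω | x < X ω} := by
      refine setLIntegral_congr_fun measurableSet_Ioi (fun s hs => ?_)
      congr 1
      ext a; simp only [mem_setOf_eq, lt_max_iff]
      exact ⟨fun h => h.elim id (fun h' => absurd h' (not_lt.2 (le_of_lt hs)).elim), Or.inl⟩
    rw [← hEq, ← key]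
    exact hint.pos_part.lintegral_lt_top

lemma tail_integrableOn_Ioi (hint : Integrable X μ) (t : ℝ) (ht : 0 ≤ t) :
    IntegrableOn (tail μ X) (Ioi t) :=
  (tail_integrableOn μ X hint).mono_set (fun x hx => lt_of_le_of_lt ht hx)

lemma tail_integrableOn_Ioc (hint : Integrable X μ) (a b : ℝ) :
    IntegrableOn (tail μ X) (Ioc a b) := by
  have : IntegrableOn (fun _ : ℝ => (1:ℝ)) (Ioc a b) := integrableOn_const measure_Ioc_lt_top.ne
  refine Integrable.mono this ((tail_anti μ X).measurable.aestronglyMeasurable).restrict ?_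
  refine Eventually.of_forall fun s => ?_
  rw [show ‖tail μ X s‖ = tail μ X s from Real.norm_of_nonneg ENNReal.toReal_nonneg, norm_one]
  have : μ {ω | s < X ω} ≤ 1 := prob_le_one
  exact ENNReal.toReal_le_of_le_ofReal one_pos.le (by simpa using this)

lemma m_tendsto (hint : Integrable X μ) :
    Tendsto (fun u => ∫ s in (0:ℝ)..u, tail μ X s) atTop
      (nhds (∫ s in Ioi (0:ℝ), tail μ X s)) :=
  intervalIntegral_tendsto_integral_Ioi 0 (tail_integrableOn μ X hint) tendsto_id

lemma tailint_split (hint : Integrable X μ) {t b : ℝ} (htb : t ≤ b) (ht : 0 ≤ t) :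
    ∫ s in Ioi t, tail μ X s
      = (∫ s in Ioc t b, tail μ X s) + ∫ s in Ioi b, tail μ X s := by
  rw [← setIntegral_union (Ioc_disjoint_Ioi le_rfl) measurableSet_Ioi
    (tail_integrableOn_Ioc μ X hint t b)
    ((tail_integrableOn μ X hint).mono_set (fun x hx => lt_of_le_of_lt (ht.trans htb) hx)),
    Ioc_union_Ioi_eq_Ioi htb]

lemma tailint_Ioc_le (hint : Integrable X μ) {t b : ℝ} (htb : t ≤ b) :
    ∫ s in Ioc t b, tail μ X s ≤ tail μ X t * (b - t) := by
  have h1 : ∫ s in Ioc t b, tail μ X s ≤ ∫ s in Ioc t b, tail μ X t := by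
    refine setIntegral_mono_on (tail_integrableOn_Ioc μ X hint t b)
      (integrableOn_const measure_Ioc_lt_top.ne) measurableSet_Ioc ?_
    exact fun s hs => tail_anti μ X hs.1.le
  calc ∫ s in Ioc t b, tail μ X s ≤ ∫ s in Ioc t b, tail μ X t := h1
    _ = tail μ X t * (b - t) := by
        rw [setIntegral_const, measureReal_def, Real.volume_Ioc, smul_eq_mul,
          ENNReal.toReal_ofReal (by linarith), mul_comm]

lemma tailint_Ioc_ge (hint : Integrable X μ) {t b : ℝ} (htb : t ≤ b) :
    tail μ X b * (b - t) ≤ ∫ s in Ioc t b, tail μ X s := by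
  have h1 : ∫ s in Ioc t b, tail μ X b ≤ ∫ s in Ioc t b, tail μ X s := by
    refine setIntegral_mono_on (integrableOn_const measure_Ioc_lt_top.ne)
      (tail_integrableOn_Ioc μ X hint t b) measurableSet_Ioc ?_
    exact fun s hs => tail_anti μ X hs.2
  calc tail μ X b * (b - t)
      = ∫ s in Ioc t b, tail μ X b := by
        rw [setIntegral_const, measureReal_def, Real.volume_Ioc, smul_eq_mul,
          ENNReal.toReal_ofReal (by linarith), mul_comm]
    _ ≤ _ := h1

lemma tailint_nonneg (t : ℝ) : 0 ≤ ∫ s in Ioi t, tail μ X s :=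
  setIntegral_nonneg measurableSet_Ioi (fun s _ => tail_nonneg μ X s)

lemma tailint_anti (hint : Integrable X μ) {t b : ℝ} (ht : 0 ≤ t) (htb : t ≤ b) :
    ∫ s in Ioi b, tail μ X s ≤ ∫ s in Ioi t, tail μ X s := by
  rw [tailint_split μ X hint htb ht]
  have : 0 ≤ ∫ s in Ioc t b, tail μ X s :=
    setIntegral_nonneg measurableSet_Ioc (fun s _ => tail_nonneg μ X s)
  linarith

lemma tailint_tendsto_zero (hint : Integrable X μ) :
    Tendsto (fun u => ∫ s in Ioi u, tail μ X s) atTop (nhds 0) := by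
  have h1 : Tendsto (fun u => (∫ s in Ioi (0:ℝ), tail μ X s) - ∫ s in (0:ℝ)..u, tail μ X s)
      atTop (nhds 0) := by
    have := (tendsto_const_nhds (x := ∫ s in Ioi (0:ℝ), tail μ X s)
      (f := atTop (α := ℝ))).sub (m_tendsto μ X hint)
    simpa using this
  refine h1.congr' ?_
  filter_upwards [eventually_ge_atTop (0:ℝ)] with u hu
  rw [intervalIntegral.integral_of_le hu, tailint_split μ X hint hu le_rfl]
  ring

/-- interval integrability of the convolution-type integrand -/
lemma conv_intable (t a b : ℝ) :
    IntervalIntegrable (fun s => tail μ X (t - s) * tail μ X s) volume a b := by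
  rw [intervalIntegrable_iff]
  have hmeas : Measurable (fun s => tail μ X (t - s) * tail μ X s) :=
    ((tail_anti μ X).measurable.comp (measurable_const.sub measurable_id)).mul
      (tail_anti μ X).measurable
  have hc : IntegrableOn (fun _ : ℝ => (1:ℝ)) (Set.uIoc a b) :=
    integrableOn_const measure_Ioc_lt_top.ne
  refine Integrable.mono hc hmeas.aestronglyMeasurable.restrict ?_
  refine Eventually.of_forall fun s => ?_
  rw [norm_one, Real.norm_of_nonneg (mul_nonneg (tail_nonneg μ X _) (tail_nonneg μ X _))]
  exact mul_le_one₀ (tail_le_one μ X _) (tail_nonneg μ X _) (tail_le_one μ X _)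

/-- monotone interval integral of tail -/
lemma tail_intable (a b : ℝ) :
    IntervalIntegrable (tail μ X) volume a b := by
  rw [intervalIntegrable_iff]
  have hc : IntegrableOn (fun _ : ℝ => (1:ℝ)) (Set.uIoc a b) :=
    integrableOn_const measure_Ioc_lt_top.ne
  refine Integrable.mono hc (tail_anti μ X).measurable.aestronglyMeasurable.restrict ?_
  refine Eventually.of_forall fun s => ?_
  rw [norm_one, Real.norm_of_nonneg (tail_nonneg μ X _)]
  exact tail_le_one μ X _

/-- lower bound for m differences -/
lemma m_diff_ge (hint : Integrable X μ) {a b : ℝ} (hab : a ≤ b) :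
    tail μ X b * (b - a) ≤ (∫ s in (0:ℝ)..b, tail μ X s) - ∫ s in (0:ℝ)..a, tail μ X s := by
  have h := intervalIntegral.integral_interval_sub_left (tail_intable μ X 0 b) (tail_intable μ X 0 a)
  rw [h, intervalIntegral.integral_of_le hab]
  exact tailint_Ioc_ge μ X hint hab

/-- symmetry: `∫ t/2..t = ∫ 0..t/2` -/
lemma conv_symm (t : ℝ) :
    (∫ s in (t/2)..t, tail μ X (t - s) * tail μ X s)
      = ∫ s in (0:ℝ)..(t/2), tail μ X (t - s) * tail μ X s := by
  have h := intervalIntegral.integral_comp_sub_left (a := (0:ℝ)) (b := t/2)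
    (fun s => tail μ X (t - s) * tail μ X s) t
  have h2 : (∫ x in (0:ℝ)..(t/2), tail μ X (t - (t - x)) * tail μ X (t - x))
      = ∫ x in (0:ℝ)..(t/2), tail μ X (t - x) * tail μ X x := by
    refine intervalIntegral.integral_congr fun x _ => ?_
    rw [sub_sub_cancel, mul_comm]
  rw [h2] at h
  rw [show t - t/2 = t/2 by ring, sub_zero] at h
  exact h.symm

lemma Ep_pos (hint : Integrable X μ) (hpos : ∀ t : ℝ, 0 < μ {ω | t < X ω}) :
    0 < ∫ ω, max (X ω) 0 ∂μ := by
  rw [layercake_pos μ X hint, tailint_split μ X hint (zero_le_one) le_rfl]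
  have h1 := tailint_Ioc_ge μ X hint (zero_le_one (α := ℝ))
  have h2 := tailint_nonneg μ X 1
  have h3 := tail_pos μ X hpos 1
  nlinarith

lemma m_lt_Ep (hint : Integrable X μ) (hpos : ∀ t : ℝ, 0 < μ {ω | t < X ω})
    {a : ℝ} (ha : 0 ≤ a) :
    (∫ s in (0:ℝ)..a, tail μ X s) + tail μ X (a+1) ≤ ∫ ω, max (X ω) 0 ∂μ := by
  rw [layercake_pos μ X hint, tailint_split μ X hint (by linarith : (0:ℝ) ≤ a+1) le_rfl]
  have h1 : (∫ s in (0:ℝ)..(a+1), tail μ X s) = ∫ s in Ioc (0:ℝ) (a+1), tail μ X s :=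
    intervalIntegral.integral_of_le (by linarith)
  have h2 := m_diff_ge μ X hint (by linarith : a ≤ a + 1)
  have h3 := tailint_nonneg μ X (a+1)
  have h4 : a + 1 - a = 1 := by ring
  rw [h4, mul_one] at h2
  linarith

lemma long_tailed (hint : Integrable X μ) (hpos : ∀ t : ℝ, 0 < μ {ω | t < X ω})
    (hSstar : Tendsto (fun t => (∫ s in (0:ℝ)..t, tail μ X (t - s) * tail μ X s) /
      (2 * (∫ ω, max (X ω) 0 ∂μ) * tail μ X t)) atTop (nhds 1))
    {a : ℝ} (ha : 0 ≤ a) :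
    Tendsto (fun t => tail μ X (t - a) / tail μ X t) atTop (nhds 1) := by
  set Ep := ∫ ω, max (X ω) 0 ∂μ with hEpdef
  set m : ℝ → ℝ := fun u => ∫ s in (0:ℝ)..u, tail μ X s with hmdef
  have hEppos : 0 < Ep := Ep_pos μ X hint hpos
  have hma : m a + tail μ X (a+1) ≤ Ep := m_lt_Ep μ X hint hpos ha
  have hmapos : 0 < Ep - m a := by have := tail_pos μ X hpos (a+1); linarith
  -- upper bound function
  set L : ℝ → ℝ := fun t => (∫ s in (0:ℝ)..t, tail μ X (t - s) * tail μ X s) /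
      (2 * Ep * tail μ X t) with hLdef
  set g : ℝ → ℝ := fun t => (Ep * L t - m a) / (m (t/2) - m a) with hgdef
  -- key eventual inequality
  have key : ∀ t : ℝ, 2*a + 2 ≤ t → tail μ X (t - a) / tail μ X t ≤ g t := by
    intro t ht
    have hat2 : a + 1 ≤ t/2 := by linarith
    have htpos : 0 < tail μ X t := tail_pos μ X hpos t
    have hD : 0 < m (t/2) - m a := by
      have := m_diff_ge μ X hint (by linarith : a ≤ t/2)
      have := tail_pos μ X hpos (t/2)
      nlinarith
    -- I t = 2 * ∫ 0..t/2
    have hsplit : (∫ s in (0:ℝ)..t, tail μ X (t - s) * tail μ X s)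
        = 2 * ∫ s in (0:ℝ)..(t/2), tail μ X (t - s) * tail μ X s := by
      have := intervalIntegral.integral_add_adjacent_intervals
        (conv_intable μ X t 0 (t/2)) (conv_intable μ X t (t/2) t)
      rw [← this, conv_symm μ X t]; ring
    have hsplit2 : (∫ s in (0:ℝ)..(t/2), tail μ X (t - s) * tail μ X s)
        = (∫ s in (0:ℝ)..a, tail μ X (t - s) * tail μ X s)
          + ∫ s in a..(t/2), tail μ X (t - s) * tail μ X s :=
      (intervalIntegral.integral_add_adjacent_intervals
        (conv_intable μ X t 0 a) (conv_intable μ X t a (t/2))).symm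
    have hlow1 : tail μ X t * m a ≤ ∫ s in (0:ℝ)..a, tail μ X (t - s) * tail μ X s := by
      have : (∫ s in (0:ℝ)..a, tail μ X t * tail μ X s)
          ≤ ∫ s in (0:ℝ)..a, tail μ X (t - s) * tail μ X s := by
        refine intervalIntegral.integral_mono_on ha
          ((tail_intable μ X 0 a).const_mul _) (conv_intable μ X t 0 a) fun s hs => ?_
        exact mul_le_mul_of_nonneg_right
          (tail_anti μ X (by linarith [hs.1] : t - s ≤ t)) (tail_nonneg μ X s)
      rwa [intervalIntegral.integral_const_mul] at this
    have hlow2 : tail μ X (t - a) * (m (t/2) - m a)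
        ≤ ∫ s in a..(t/2), tail μ X (t - s) * tail μ X s := by
      have h1 : (∫ s in a..(t/2), tail μ X (t - a) * tail μ X s)
          ≤ ∫ s in a..(t/2), tail μ X (t - s) * tail μ X s := by
        refine intervalIntegral.integral_mono_on (by linarith)
          ((tail_intable μ X a (t/2)).const_mul _) (conv_intable μ X t a (t/2)) fun s hs => ?_
        exact mul_le_mul_of_nonneg_right
          (tail_anti μ X (by linarith [hs.1] : t - s ≤ t - a)) (tail_nonneg μ X s)
      have h2 : (∫ s in a..(t/2), tail μ X s) = m (t/2) - m a :=
        (intervalIntegral.integral_interval_sub_left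
          (tail_intable μ X 0 (t/2)) (tail_intable μ X 0 a)).symm ▸ rfl
      rw [intervalIntegral.integral_const_mul] at h1
      calc tail μ X (t-a) * (m (t/2) - m a)
          = tail μ X (t-a) * ∫ s in a..(t/2), tail μ X s := by
            rw [← intervalIntegral.integral_interval_sub_left
              (tail_intable μ X 0 (t/2)) (tail_intable μ X 0 a)]
        _ ≤ _ := h1
    -- combine
    have hIt : 2 * (tail μ X t * m a + tail μ X (t - a) * (m (t/2) - m a))
        ≤ ∫ s in (0:ℝ)..t, tail μ X (t - s) * tail μ X s := by
      rw [hsplit, hsplit2]; linarith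
    have hEL : Ep * L t * tail μ X t
        = (∫ s in (0:ℝ)..t, tail μ X (t - s) * tail μ X s) / 2 := by
      rw [hLdef]; field_simp
    rw [hgdef, div_le_div_iff₀ htpos hD]
    nlinarith [hIt, hEL]
  -- g tends to 1
  have hg : Tendsto g atTop (nhds 1) := by
    have h1 : Tendsto (fun t => Ep * L t - m a) atTop (nhds (Ep - m a)) := by
      have := (tendsto_const_nhds (x := Ep) (f := atTop (α := ℝ))).mul hSstar
      simpa using this.sub (tendsto_const_nhds (x := m a))
    have h2 : Tendsto (fun t => m (t/2) - m a) atTop (nhds (Ep - m a)) := by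
      have hhalf : Tendsto (fun t : ℝ => t/2) atTop atTop :=
        tendsto_id.atTop_div_const two_pos
      have := (m_tendsto μ X hint).comp hhalf
      rw [← layercake_pos μ X hint] at this
      simpa using this.sub (tendsto_const_nhds (x := m a))
    have := h1.div h2 (ne_of_gt hmapos)
    rw [div_self (ne_of_gt hmapos)] at this
    exact this
  -- squeeze
  refine tendsto_of_tendsto_of_tendsto_of_le_of_le' tendsto_const_nhds hg ?_ ?_
  · filter_upwards with t
    exact (one_le_div (tail_pos μ X hpos t)).2 (tail_anti μ X (by linarith : t - a ≤ t))
  · filter_upwards [eventually_ge_atTop (2*a+2)] with t ht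
    exact key t ht

/-- representation of the joint event via the product measure -/
lemma measure_rep (Z : Ω → ℝ) (hX : Measurable X) (hZ : Measurable Z)
    (hindep : IndepFun X Z μ) (t : ℝ) :
    μ {ω | X ω + Z ω ≤ t ∧ t < Z ω}
      = ∫⁻ x, (μ.map Z) (Ioc t (t - x)) ∂(μ.map X) := by
  have hmap : μ.map (fun ω => (X ω, Z ω)) = (μ.map X).prod (μ.map Z) :=
    (indepFun_iff_map_prod_eq_prod_map_map hX.aemeasurable hZ.aemeasurable).mp hindep
  have hS : MeasurableSet {p : ℝ × ℝ | p.1 + p.2 ≤ t ∧ t < p.2} :=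
    (measurableSet_le (measurable_fst.add measurable_snd) measurable_const).inter
      (measurableSet_lt measurable_const measurable_snd)
  have h1 : {ω | X ω + Z ω ≤ t ∧ t < Z ω}
      = (fun ω => (X ω, Z ω)) ⁻¹' {p : ℝ × ℝ | p.1 + p.2 ≤ t ∧ t < p.2} := rfl
  rw [h1, ← Measure.map_apply (hX.prodMk hZ) hS, hmap, Measure.prod_apply hS]
  refine lintegral_congr fun x => ?_
  congr 1
  ext z
  simp only [mem_preimage, mem_setOf_eq, mem_Ioc]
  constructor
  · rintro ⟨h1, h2⟩; exact ⟨h2, by linarith⟩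
  · rintro ⟨h1, h2⟩; exact ⟨by linarith, h1⟩

/-- the map measure of `Ioc t b` in the integrated-tail regime -/
lemma map_Ioc_eq (Z : Ω → ℝ) (hZ : Measurable Z) (hint : Integrable X μ)
    {c : ℝ} (hc : 0 < c)
    {T0 : ℝ} (hT0 : 0 ≤ T0)
    (hZt : ∀ u : ℝ, T0 ≤ u → tail μ Z u = c⁻¹ * ∫ s in Ioi u, tail μ X s)
    {t b : ℝ} (ht : T0 ≤ t) (htb : t ≤ b) :
    (μ.map Z) (Ioc t b) = ENNReal.ofReal (c⁻¹ * ∫ s in Ioc t b, tail μ X s) := by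
  have hsub : Ioi b ⊆ Ioi t := Ioi_subset_Ioi htb
  have hdiff : Ioc t b = Ioi t \ Ioi b := by
    ext z; simp only [mem_Ioc, mem_diff, mem_Ioi, not_lt]
  calc (μ.map Z) (Ioc t b) = (μ.map Z) (Ioi t) - (μ.map Z) (Ioi b) := by
        rw [hdiff, measure_diff hsub measurableSet_Ioi.nullMeasurableSet (measure_ne_top _ _)]
    _ = ENNReal.ofReal (tail μ Z t - tail μ Z b) := by
        rw [tail_eq_map μ Z hZ, tail_eq_map μ Z hZ,
          ENNReal.ofReal_sub _ (tail_nonneg μ Z b)]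
    _ = ENNReal.ofReal (c⁻¹ * ∫ s in Ioc t b, tail μ X s) := by
        rw [hZt t ht, hZt b (ht.trans htb), tailint_split μ X hint htb (hT0.trans ht)]
        congr 1
        ring

/-- uniform upper bound for the inner measure -/
lemma inner_upper (Z : Ω → ℝ) (hZ : Measurable Z) (hint : Integrable X μ)
    {c : ℝ} (hc : 0 < c)
    {T0 : ℝ} (hT0 : 0 ≤ T0)
    (hZt : ∀ u : ℝ, T0 ≤ u → tail μ Z u = c⁻¹ * ∫ s in Ioi u, tail μ X s)
    {t : ℝ} (ht : T0 ≤ t) (x : ℝ) :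
    (μ.map Z) (Ioc t (t - x))
      ≤ ENNReal.ofReal (c⁻¹ * tail μ X t * max (-x) 0) := by
  rcases le_or_gt x 0 with hx | hx
  · have htb : t ≤ t - x := by linarith
    rw [map_Ioc_eq μ X Z hZ hint hc hT0 hZt ht htb]
    refine ENNReal.ofReal_le_ofReal ?_
    have h1 := tailint_Ioc_le μ X hint htb
    have h2 : t - x - t = -x := by ring
    have h3 : max (-x) 0 = -x := max_eq_left (by linarith)
    rw [h3, mul_assoc]
    refine mul_le_mul_of_nonneg_left ?_ (inv_nonneg.2 hc.le)
    rw [h2] at h1; exact h1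
  · have : Ioc t (t - x) = ∅ := Ioc_eq_empty (not_lt.2 (by linarith))
    have h3 : max (-x) 0 = 0 := max_eq_right (by linarith)
    rw [this, h3, mul_zero]
    simp

/-- uniform lower bound for the inner measure -/
lemma inner_lower (Z : Ω → ℝ) (hZ : Measurable Z) (hint : Integrable X μ)
    {c : ℝ} (hc : 0 < c)
    {T0 : ℝ} (hT0 : 0 ≤ T0)
    (hZt : ∀ u : ℝ, T0 ≤ u → tail μ Z u = c⁻¹ * ∫ s in Ioi u, tail μ X s)
    {t a : ℝ} (ht : T0 ≤ t) (ha : 0 ≤ a) (x : ℝ) :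
    ENNReal.ofReal (c⁻¹ * tail μ X (t + a) * min (max (-x) 0) a)
      ≤ (μ.map Z) (Ioc t (t - x)) := by
  set y := min (max (-x) 0) a with hy
  have hy0 : 0 ≤ y := le_min (le_max_right _ _) ha
  have hyle : y ≤ max (-x) 0 := min_le_left _ _
  have hya : y ≤ a := min_le_right _ _
  rcases le_or_gt x 0 with hx | hx
  · -- Ioc t (t+y) ⊆ Ioc t (t-x)
    have hsub : Ioc t (t + y) ⊆ Ioc t (t - x) := by
      apply Ioc_subset_Ioc le_rfl
      have : y ≤ -x := hyle.trans_eq (max_eq_left (by linarith))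
      linarith
    refine le_trans ?_ (measure_mono hsub)
    rw [map_Ioc_eq μ X Z hZ hint hc hT0 hZt ht (by linarith : t ≤ t + y)]
    refine ENNReal.ofReal_le_ofReal ?_
    have h1 := tailint_Ioc_ge μ X hint (by linarith : t ≤ t + y)
    have h2 : t + y - t = y := by ring
    rw [h2] at h1
    have h3 : tail μ X (t + a) * y ≤ tail μ X (t + y) * y :=
      mul_le_mul_of_nonneg_right (tail_anti μ X (by linarith)) hy0
    rw [mul_assoc]
    refine mul_le_mul_of_nonneg_left (h3.trans h1) (inv_nonneg.2 hc.le)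
  · -- x > 0 : y = 0
    have hy0' : y = 0 := by
      rw [hy, max_eq_right (by linarith : -x ≤ 0), min_eq_left ha]
    rw [hy0']
    simp

lemma long_tailed_add (hint : Integrable X μ) (hpos : ∀ t : ℝ, 0 < μ {ω | t < X ω})
    (hSstar : Tendsto (fun t => (∫ s in (0:ℝ)..t, tail μ X (t - s) * tail μ X s) /
      (2 * (∫ ω, max (X ω) 0 ∂μ) * tail μ X t)) atTop (nhds 1))
    {a : ℝ} (ha : 0 ≤ a) :
    Tendsto (fun t => tail μ X (t + a) / tail μ X t) atTop (nhds 1) := by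
  have h1 : Tendsto (fun t => tail μ X t / tail μ X (t + a)) atTop (nhds 1) := by
    refine ((long_tailed μ X hint hpos hSstar ha).comp
      (tendsto_atTop_add_const_right atTop a tendsto_id)).congr fun t => ?_
    simp [Function.comp, add_sub_cancel_right]
  have h3 := h1.inv₀ one_ne_zero
  rw [inv_one] at h3
  refine h3.congr fun t => ?_
  rw [inv_div]


end Aux

/-- under Assumption A,
`P(X + Z ≤ t, Z > t) ~ P(X > t) · E[X⁻]/|E[X]|` as `t → ∞`. -/
theorem statement12 {Ω : Type*} [MeasurableSpace Ω] (μ : Measure Ω)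
    [IsProbabilityMeasure μ]
    (X Z : Ω → ℝ) (hX : Measurable X) (hZ : Measurable Z)
    (hindep : IndepFun X Z μ)
    (hint : Integrable X μ) (hneg : ∫ ω, X ω ∂μ < 0)
    (hpos : ∀ t : ℝ, 0 < μ {ω | t < X ω})
    -- Assumption A: `X⁺ ∈ S*`
    (hSstar : Tendsto (fun t => (∫ s in (0:ℝ)..t, tail μ X (t - s) * tail μ X s) /
      (2 * (∫ ω, max (X ω) 0 ∂μ) * tail μ X t)) atTop (nhds 1))
    -- `Z ≥ 0` has the integrated-tail distribution of `X`
    (hZnn : ∀ ω, 0 ≤ Z ω)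
    (hZtail : ∀ t : ℝ, 0 ≤ t →
      tail μ Z t = min (|∫ ω, X ω ∂μ|⁻¹ * ∫ s in Set.Ioi t, tail μ X s) 1) :
    Tendsto (fun t => (μ {ω | X ω + Z ω ≤ t ∧ t < Z ω}).toReal /
        (tail μ X t * ((∫ ω, max (-X ω) 0 ∂μ) / |∫ ω, X ω ∂μ|)))
      atTop (nhds 1) := by
  set c : ℝ := |∫ ω, X ω ∂μ| with hcdef
  have hcpos : 0 < c := abs_pos.2 (ne_of_lt hneg)
  set Em : ℝ := ∫ ω, max (-X ω) 0 ∂μ with hEmdef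
  -- Em ≥ c > 0
  have hEm : c ≤ Em := by
    have h1 := integral_eq_integral_pos_part_sub_integral_neg_part hint
    have h2 : (∫ a, (Real.toNNReal (X a) : ℝ) ∂μ) = ∫ ω, max (X ω) 0 ∂μ := by
      refine integral_congr_ae (Eventually.of_forall fun ω => ?_)
      exact Real.coe_toNNReal' (X ω)
    have h3 : (∫ a, (Real.toNNReal (-X a) : ℝ) ∂μ) = Em := by
      refine integral_congr_ae (Eventually.of_forall fun ω => ?_)
      exact Real.coe_toNNReal' (-X ω)
    rw [h2, h3] at h1
    have h4 : 0 ≤ ∫ ω, max (X ω) 0 ∂μ :=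
      integral_nonneg fun ω => le_max_right _ _
    rw [hcdef, abs_of_neg hneg]
    linarith
  have hEmpos : 0 < Em := lt_of_lt_of_le hcpos hEm
  -- choose T0
  obtain ⟨T0, hT0⟩ := eventually_atTop.1
    (((tailint_tendsto_zero μ X hint).eventually_lt_const hcpos).and
      (eventually_ge_atTop (0:ℝ)))
  have hT0nn : 0 ≤ T0 := (hT0 T0 le_rfl).2
  have hZt : ∀ u : ℝ, T0 ≤ u → tail μ Z u = c⁻¹ * ∫ s in Ioi u, tail μ X s := by
    intro u hu
    rw [hZtail u ((hT0 u hu).2)]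
    refine min_eq_left ?_
    rw [inv_mul_le_iff₀ hcpos, mul_one]
    exact (hT0 u hu).1.le
  -- map measure instance
  haveI : IsProbabilityMeasure (μ.map X) := Measure.isProbabilityMeasure_map hX.aemeasurable
  -- integrability of negative parts under the map measure
  have hmeasneg : Measurable (fun x : ℝ => max (-x) 0) :=
    measurable_neg.max measurable_const
  have hIntν : Integrable (fun x : ℝ => max (-x) 0) (μ.map X) := by
    rw [integrable_map_measure hmeasneg.aestronglyMeasurable hX.aemeasurable]
    exact hint.neg_part
  have hEmν : ∫ x, max (-x) 0 ∂(μ.map X) = Em := by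
    rw [integral_map hX.aemeasurable hmeasneg.aestronglyMeasurable]
  -- truncated expectations
  set Ma : ℝ → ℝ := fun a => ∫ ω, min (max (-X ω) 0) a ∂μ with hMadef
  have hMaν : ∀ a : ℝ, ∫ x, min (max (-x) 0) a ∂(μ.map X) = Ma a := by
    intro a
    rw [integral_map hX.aemeasurable (hmeasneg.min measurable_const).aestronglyMeasurable]
  have hMatend : Tendsto Ma atTop (nhds Em) := by
    refine tendsto_integral_filter_of_dominated_convergence (fun ω => max (-X ω) 0)
      (Eventually.of_forall fun a =>
        ((hX.neg.max measurable_const).min measurable_const).aestronglyMeasurable)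
      ?_ hint.neg_part ?_
    · filter_upwards [eventually_ge_atTop (0:ℝ)] with a ha
      refine Eventually.of_forall fun ω => ?_
      rw [Real.norm_of_nonneg (le_min (le_max_right _ _) ha)]
      exact min_le_left _ _
    · refine Eventually.of_forall fun ω => ?_
      refine tendsto_const_nhds.congr' ?_
      filter_upwards [eventually_ge_atTop (max (-X ω) 0)] with a ha
      rw [min_eq_left ha]
  -- numerator bounds
  set N : ℝ → ℝ := fun t => (μ {ω | X ω + Z ω ≤ t ∧ t < Z ω}).toReal with hNdef
  have hNupper : ∀ t : ℝ, T0 ≤ t → N t ≤ c⁻¹ * tail μ X t * Em := by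
    intro t ht
    have hle : μ {ω | X ω + Z ω ≤ t ∧ t < Z ω}
        ≤ ENNReal.ofReal (c⁻¹ * tail μ X t * Em) := by
      rw [measure_rep μ X Z hX hZ hindep t]
      refine le_trans (lintegral_mono fun x =>
        inner_upper μ X Z hZ hint hcpos hT0nn hZt ht x) ?_
      have hInt' : Integrable (fun x : ℝ => c⁻¹ * tail μ X t * max (-x) 0) (μ.map X) :=
        hIntν.const_mul _
      rw [← ofReal_integral_eq_lintegral_ofReal hInt'
        (Eventually.of_forall fun x => mul_nonneg
          (mul_nonneg (inv_nonneg.2 hcpos.le) (tail_nonneg μ X t)) (le_max_right _ _))]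
      rw [integral_const_mul, hEmν]
    exact ENNReal.toReal_le_of_le_ofReal
      (mul_nonneg (mul_nonneg (inv_nonneg.2 hcpos.le) (tail_nonneg μ X t)) hEmpos.le) hle
  have hNlower : ∀ a : ℝ, 0 ≤ a → ∀ t : ℝ, T0 ≤ t →
      c⁻¹ * tail μ X (t + a) * Ma a ≤ N t := by
    intro a ha t ht
    have hge : ENNReal.ofReal (c⁻¹ * tail μ X (t + a) * Ma a)
        ≤ μ {ω | X ω + Z ω ≤ t ∧ t < Z ω} := by
      rw [measure_rep μ X Z hX hZ hindep t]
      have hInt' : Integrable (fun x : ℝ => c⁻¹ * tail μ X (t + a) * min (max (-x) 0) a)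
          (μ.map X) := (hIntν.mono' ((hmeasneg.min measurable_const).aestronglyMeasurable)
            (Eventually.of_forall fun x => by
              rw [Real.norm_of_nonneg (le_min (le_max_right _ _) ha)]
              exact min_le_left _ _)).const_mul _
      refine le_trans (le_of_eq ?_) (lintegral_mono fun x =>
        inner_lower μ X Z hZ hint hcpos hT0nn hZt ht ha x)
      rw [← ofReal_integral_eq_lintegral_ofReal hInt'
        (Eventually.of_forall fun x => mul_nonneg
          (mul_nonneg (inv_nonneg.2 hcpos.le) (tail_nonneg μ X (t+a)))
          (le_min (le_max_right _ _) ha))]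
      rw [integral_const_mul, hMaν a]
    exact (ENNReal.ofReal_le_iff_le_toReal (measure_ne_top _ _)).1 hge
  -- final convergence
  rw [Metric.tendsto_nhds]
  intro ε hε
  set δ : ℝ := min (ε/4) (1/2) with hδdef
  have hδpos : 0 < δ := lt_min (by linarith) (by norm_num)
  have hδle : δ ≤ ε/4 := min_le_left _ _
  have hδhalf : δ ≤ 1/2 := min_le_right _ _
  -- choose a
  have hMev : ∀ᶠ a in atTop, Em * (1 - δ) < Ma a :=
    hMatend.eventually_const_lt (by nlinarith)
  obtain ⟨a, hMaa, ha⟩ := (hMev.and (eventually_ge_atTop (0:ℝ))).exists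
  -- long-tailedness
  have hlt : Tendsto (fun t => tail μ X (t + a) / tail μ X t) atTop (nhds 1) :=
    long_tailed_add μ X hint hpos hSstar ha
  have hltev : ∀ᶠ t in atTop, 1 - δ < tail μ X (t + a) / tail μ X t :=
    hlt.eventually_const_lt (by linarith)
  filter_upwards [hltev, eventually_ge_atTop T0] with t hlt1 ht
  have htail : 0 < tail μ X t := tail_pos μ X hpos t
  set D : ℝ := tail μ X t * (Em / c) with hDdef
  have hDpos : 0 < D := mul_pos htail (div_pos hEmpos hcpos)
  have hNup := hNupper t ht
  have hNlo := hNlower a ha t ht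
  have hNnn : 0 ≤ N t := ENNReal.toReal_nonneg
  have hup : N t / D ≤ 1 := by
    rw [div_le_one hDpos, hDdef]
    calc N t ≤ c⁻¹ * tail μ X t * Em := hNup
      _ = tail μ X t * (Em / c) := by field_simp; try ring
  have htail2 : (1 - δ) * tail μ X t < tail μ X (t + a) := by
    rw [← lt_div_iff₀ htail]
    exact hlt1
  have hlo : 1 - 2*δ ≤ N t / D := by
    have h1 : (1-δ) * (1-δ) ≤ N t / D := by
      rw [le_div_iff₀ hDpos, hDdef]
      have h2 : c⁻¹ * ((1-δ) * tail μ X t) * (Em * (1-δ)) ≤ c⁻¹ * tail μ X (t+a) * Ma a := by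
        have hma_nn : 0 ≤ Em * (1 - δ) := by nlinarith
        have ht1 : 0 ≤ (1-δ) * tail μ X t := by nlinarith
        refine mul_le_mul (mul_le_mul_of_nonneg_left htail2.le (inv_nonneg.2 hcpos.le))
          hMaa.le hma_nn (mul_nonneg (inv_nonneg.2 hcpos.le) (tail_nonneg μ X (t+a)))
      calc (1-δ)*(1-δ) * (tail μ X t * (Em / c))
          = c⁻¹ * ((1-δ) * tail μ X t) * (Em * (1-δ)) := by field_simp; try ring
        _ ≤ c⁻¹ * tail μ X (t+a) * Ma a := h2
        _ ≤ N t := hNlo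
    nlinarith
  rw [Real.dist_eq, abs_lt]
  constructor <;> [skip; skip]
  · linarith
  · linarith
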